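/- Suppose all vote shares p_d are distinct, and let S ∈ {1,…,N−1} satisfy S − 1 ≥ a (party A is overrepresented at S by at least one seat). Then for every w ≥ 0, the seat total S minimizes Φ_p(·; w) over {0,…,N} if and only if 2·p_(S+1) − 1 ≤ w ≤ 2·p_(S) − 1. -/
import Mathlib


open Finset

/-- Sum of the `S` largest entries of the vote-share profile `p`. -/
noncomputable def topSum {N : ℕ} (p : Fin N → ℝ) (S : ℕ) : ℝ :=
  ∑ i : Fin N, if (i : ℕ) < S then p (Tuple.sort p i.rev) else 0

/-- `ordStat p i` is the `(i+1)`-th largest entry of `p` (so `ordStat p ⟨S-1,_⟩` is `p_(S)`). -/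
noncomputable def ordStat {N : ℕ} (p : Fin N → ℝ) (i : Fin N) : ℝ :=
  p (Tuple.sort p i.rev)

/-- Total misrepresentation `Φ_p(S; w) = S + a − 2·Γ_p(S) + w·|a − S|` of a top-`S`
allocation at weight `w`, where `a = ∑ d, p d`. -/
noncomputable def PhiS {N : ℕ} (p : Fin N → ℝ) (S : ℕ) (w : ℝ) : ℝ :=
  (S : ℝ) + (∑ d, p d) - 2 * topSum p S + w * |(∑ d, p d) - (S : ℝ)|

lemma ordStat_anti {N : ℕ} (p : Fin N → ℝ) : Antitone (ordStat p) := by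
  intro i j hij
  exact Tuple.monotone_sort p (Fin.rev_le_rev.mpr hij)

lemma topSum_succ {N : ℕ} (p : Fin N → ℝ) (S : ℕ) (hS : S < N) :
    topSum p (S + 1) = topSum p S + ordStat p ⟨S, hS⟩ := by
  unfold topSum ordStat
  have key : ∀ i : Fin N, (if (i : ℕ) < S + 1 then p (Tuple.sort p i.rev) else 0)
      = (if (i : ℕ) < S then p (Tuple.sort p i.rev) else 0)
      + (if i = ⟨S, hS⟩ then p (Tuple.sort p i.rev) else 0) := by
    intro i
    rcases lt_trichotomy (i : ℕ) S with h | h | h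
    · have h1 : (i : ℕ) < S + 1 := by omega
      have h2 : i ≠ ⟨S, hS⟩ := by simp [Fin.ext_iff]; omega
      simp [h, h1, h2]
    · have h1 : (i : ℕ) < S + 1 := by omega
      have h2 : i = ⟨S, hS⟩ := by simp [Fin.ext_iff, h]
      simp [h1, h2]
    · have h1 : ¬ (i : ℕ) < S + 1 := by omega
      have h2 : i ≠ ⟨S, hS⟩ := by simp [Fin.ext_iff]; omega
      simp [h1, h2, show ¬ (i:ℕ) < S by omega]
  rw [Finset.sum_congr rfl (fun i _ => key i), Finset.sum_add_distrib]
  simp [Finset.sum_ite_eq']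

lemma phi_step_le {N : ℕ} (p : Fin N → ℝ) (T : ℕ) (hT : T < N) (w : ℝ) (hw : 0 ≤ w) :
    PhiS p (T + 1) w ≤ PhiS p T w + (1 + w - 2 * ordStat p ⟨T, hT⟩) := by
  unfold PhiS
  rw [topSum_succ p T hT]
  have h1 : |(∑ d, p d) - ((T : ℝ) + 1)| - |(∑ d, p d) - (T : ℝ)| ≤ 1 := by
    have h := abs_sub_abs_le_abs_sub ((∑ d, p d) - ((T : ℝ) + 1)) ((∑ d, p d) - (T : ℝ))
    have h2 : ((∑ d, p d) - ((T : ℝ) + 1)) - ((∑ d, p d) - (T : ℝ)) = -1 := by ring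
    rw [h2] at h; simpa using h
  have h3 := mul_le_mul_of_nonneg_left h1 hw
  push_cast
  nlinarith [h3]

lemma phi_step_eq {N : ℕ} (p : Fin N → ℝ) (T : ℕ) (hT : T < N) (w : ℝ)
    (ha : (∑ d, p d) ≤ (T : ℝ)) :
    PhiS p (T + 1) w = PhiS p T w + (1 + w - 2 * ordStat p ⟨T, hT⟩) := by
  unfold PhiS
  rw [topSum_succ p T hT]
  have h1 : |(∑ d, p d) - (((T : ℕ) : ℝ) + 1)| = ((T : ℝ) + 1) - (∑ d, p d) := by
    rw [abs_of_nonpos (by linarith)]; ring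
  have h2 : |(∑ d, p d) - (T : ℝ)| = (T : ℝ) - (∑ d, p d) := by
    rw [abs_of_nonpos (by linarith)]; ring
  push_cast
  rw [h1, h2]; ring

/-- Corollary 1, overrepresented case.
Suppose all vote shares are distinct and `S ∈ {1,…,N−1}` satisfies `S − 1 ≥ a`
(party A is overrepresented at `S` by at least one seat). Then for every `w ≥ 0`,
`S` minimizes `Φ_p(·; w)` over `{0,…,N}` iff `2·p_(S+1) − 1 ≤ w ≤ 2·p_(S) − 1`. -/
theorem stmt4 (N : ℕ) (hN : 3 ≤ N) (p : Fin N → ℝ)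
    (hp : ∀ d, 0 ≤ p d ∧ p d ≤ 1) (hinj : Function.Injective p)
    (S : ℕ) (hS1 : 1 ≤ S) (hS2 : S ≤ N - 1)
    (ha : (∑ d, p d) ≤ (S : ℝ) - 1)
    (w : ℝ) (hw : 0 ≤ w) :
    (∀ S' ≤ N, PhiS p S w ≤ PhiS p S' w) ↔
      (2 * ordStat p ⟨S, by omega⟩ - 1 ≤ w ∧
       w ≤ 2 * ordStat p ⟨S - 1, by omega⟩ - 1) := by
  have hSN : S < N := by omega
  have hS1N : S - 1 < N := by omega
  have hcast : ((S - 1 : ℕ) : ℝ) = (S : ℝ) - 1 := by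
    push_cast [Nat.cast_sub hS1]; ring
  have ha1 : (∑ d, p d) ≤ ((S - 1 : ℕ) : ℝ) := by rw [hcast]; exact ha
  have ha' : (∑ d, p d) ≤ (S : ℝ) := by linarith
  constructor
  · intro h
    constructor
    · have h1 := h (S + 1) (by omega)
      have h2 := phi_step_eq p S hSN w ha'
      rw [h2] at h1
      linarith
    · have h1 := h (S - 1) (by omega)
      have h2 := phi_step_eq p (S - 1) hS1N w ha1
      rw [Nat.sub_add_cancel hS1] at h2
      rw [h2] at h1
      linarith
  · rintro ⟨hlo, hhi⟩
    intro S' hS'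
    rcases le_or_gt S' S with hle | hgt
    · -- left side: show ∀ k ≤ S, PhiS p S w ≤ PhiS p (S - k) w
      have key : ∀ k, k ≤ S → PhiS p S w ≤ PhiS p (S - k) w := by
        intro k
        induction k with
        | zero => intro _; simp
        | succ k ih =>
          intro hkS
          have hk : k ≤ S := by omega
          set T := S - (k + 1) with hT
          have hTN : T < N := by omega
          have hTS : T ≤ S - 1 := by omega
          have hstep := phi_step_le p T hTN w hw
          have hTsucc : T + 1 = S - k := by omega
          rw [hTsucc] at hstep
          have hq : ordStat p ⟨S - 1, hS1N⟩ ≤ ordStat p ⟨T, hTN⟩ :=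
            ordStat_anti p (show (⟨T, hTN⟩ : Fin N) ≤ ⟨S - 1, hS1N⟩ from hTS)
          have := ih hk
          linarith
      have := key (S - S') (by omega)
      rwa [show S - (S - S') = S' by omega] at this
    · -- right side: show ∀ T, S ≤ T → T ≤ N → PhiS p S w ≤ PhiS p T w
      have key : ∀ T, S ≤ T → T ≤ N → PhiS p S w ≤ PhiS p T w := by
        intro T
        induction T with
        | zero => intro h1 _; omega
        | succ T ih =>
          intro h1 h2
          rcases Nat.lt_or_ge S (T + 1) with hlt | hge
          · have hST : S ≤ T := by omega
            have hTN : T < N := by omega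
            have haT : (∑ d, p d) ≤ (T : ℝ) := by
              have : (S : ℝ) ≤ (T : ℝ) := by exact_mod_cast hST
              linarith
            have hstep := phi_step_eq p T hTN w haT
            have hq : ordStat p ⟨T, hTN⟩ ≤ ordStat p ⟨S, hSN⟩ :=
              ordStat_anti p (show (⟨S, hSN⟩ : Fin N) ≤ ⟨T, hTN⟩ from hST)
            have := ih hST (by omega)
            linarith
          · have : S = T + 1 := by omega
            rw [this]
      exact key S' (by omega) hS'
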